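/- arXiv:2008.13537 — 3 statements merged into one kernel-verified Lean document; each statement's English description precedes it below -/
import Mathlib

section
/- Let M ∈ [0,2]^{V×K} be a cost matrix, let x̃ ∈ Δ^V and z ∈ Δ^K be probability vectors, and define φ(z) = softmax((2·1 − M) z) ∈ Δ^V, i.e., φ(z)_v = exp(Σ_k z_k (2 − m_{vk})) / Σ_{v'} exp(Σ_k z_k (2 − m_{v'k})). If V ≥ 8, then the optimal transport distance d_M(x̃, z) := min_{P ∈ U(x̃,z)} ⟨P, M⟩ satisfies d_M(x̃, z) ≤ −x̃^T log φ(z). -/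
open scoped BigOperators

def transportPolytope {V K : ℕ} (r : Fin V → ℝ) (c : Fin K → ℝ) :
    Set (Matrix (Fin V) (Fin K) ℝ) :=
  {P | (∀ v k, 0 ≤ P v k) ∧ (∀ v, ∑ k, P v k = r v) ∧ (∀ k, ∑ v, P v k = c k)}

noncomputable def otDist {V K : ℕ} (M : Matrix (Fin V) (Fin K) ℝ)
    (r : Fin V → ℝ) (c : Fin K → ℝ) : ℝ :=
  sInf ((fun P => ∑ v, ∑ k, P v k * M v k) '' transportPolytope r c)

theorem stmt0 {V K : ℕ} (hV : 8 ≤ V)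
    (M : Matrix (Fin V) (Fin K) ℝ) (hM : ∀ v k, M v k ∈ Set.Icc (0:ℝ) 2)
    (x : Fin V → ℝ) (hx0 : ∀ v, 0 ≤ x v) (hx1 : ∑ v, x v = 1)
    (z : Fin K → ℝ) (hz0 : ∀ k, 0 ≤ z k) (hz1 : ∑ k, z k = 1)
    (φ : Fin V → ℝ)
    (hφ : ∀ v, φ v = Real.exp (∑ k, z k * (2 - M v k)) /
      ∑ v', Real.exp (∑ k, z k * (2 - M v' k))) :
    otDist M x z ≤ - ∑ v, x v * Real.log (φ v) := by
  classical
  set u : Fin V → ℝ := fun v => ∑ k, z k * (2 - M v k) with hu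
  set S : ℝ := ∑ v', Real.exp (u v') with hS
  have hSpos : 0 < S := Finset.sum_pos (fun v _ => Real.exp_pos _) ⟨⟨0, by omega⟩, Finset.mem_univ _⟩
  -- product coupling
  have hmem : (fun v k => x v * z k) ∈ transportPolytope x z := by
    refine ⟨fun v k => mul_nonneg (hx0 v) (hz0 k), fun v => ?_, fun k => ?_⟩
    · rw [← Finset.mul_sum, hz1, mul_one]
    · rw [← Finset.sum_mul, hx1, one_mul]
  have hbdd : BddBelow ((fun P => ∑ v, ∑ k, P v k * M v k) '' transportPolytope x z) := by
    refine ⟨0, fun y hy => ?_⟩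
    obtain ⟨P, hP, rfl⟩ := hy
    exact Finset.sum_nonneg fun v _ => Finset.sum_nonneg fun k _ =>
      mul_nonneg (hP.1 v k) ((hM v k).1)
  have h1 : otDist M x z ≤ ∑ v, ∑ k, (x v * z k) * M v k :=
    csInf_le hbdd ⟨_, hmem, rfl⟩
  refine h1.trans ?_
  -- rewrite RHS
  have hlog : ∀ v, Real.log (φ v) = u v - Real.log S := by
    intro v
    rw [hφ v, Real.log_div (Real.exp_ne_zero _) (ne_of_gt hSpos), Real.log_exp]
  have hux : ∀ v, u v = 2 - ∑ k, z k * M v k := by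
    intro v
    simp only [hu, mul_sub, Finset.sum_sub_distrib, ← Finset.sum_mul, hz1, one_mul]
  have hlogS : 2 ≤ Real.log S := by
    rw [Real.le_log_iff_exp_le hSpos]
    have h8 : (8 : ℝ) ≤ S := by
      calc (8 : ℝ) ≤ (V : ℝ) := by exact_mod_cast hV
        _ = ∑ _v : Fin V, (1 : ℝ) := by simp
        _ ≤ S := Finset.sum_le_sum fun v _ => by
            rw [← Real.exp_zero]
            apply Real.exp_le_exp.mpr
            exact Finset.sum_nonneg fun k _ => mul_nonneg (hz0 k)
              (by linarith [(hM v k).2])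
    have he : Real.exp 2 < 8 := by
      have h1 : Real.exp 1 < 2.7182818286 := Real.exp_one_lt_d9
      have : Real.exp 2 = Real.exp 1 * Real.exp 1 := by
        rw [← Real.exp_add]; norm_num
      nlinarith [Real.exp_pos 1]
    linarith
  have hr : - ∑ v, x v * Real.log (φ v) =
      ∑ v, x v * (∑ k, z k * M v k) + (Real.log S - 2) := by
    have : ∀ v, x v * Real.log (φ v) = x v * u v - x v * Real.log S := by
      intro v; rw [hlog v]; ring
    simp only [this, Finset.sum_sub_distrib, ← Finset.sum_mul, hx1, one_mul]
    have : ∀ v, x v * u v = x v * 2 - x v * (∑ k, z k * M v k) := by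
      intro v; rw [hux v]; ring
    simp only [this, Finset.sum_sub_distrib]
    have h2 : ∑ v, x v * 2 = 2 := by rw [← Finset.sum_mul, hx1, one_mul]
    rw [h2]; ring
  rw [hr]
  have hls : ∑ v, ∑ k, (x v * z k) * M v k = ∑ v, x v * (∑ k, z k * M v k) := by
    apply Finset.sum_congr rfl
    intro v _
    rw [Finset.mul_sum]
    apply Finset.sum_congr rfl
    intro k _; ring
  rw [hls]
  linarith
end

section
/- Let r ∈ Δ^{D_r}, c ∈ Δ^{D_c}, and M ∈ R_{≥0}^{D_r×D_c}. At α = 0, the entropy-constrained set U_0(r,c) = {P ∈ U(r,c) : h(P) ≥ h(r) + h(c)} contains only the independent coupling P = r c^T, and hence d_{M,0}(r,c) = Σ_{ij} r_i c_j m_{ij}. -/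
open scoped BigOperators

noncomputable def matEntropy {V K : ℕ} (P : Matrix (Fin V) (Fin K) ℝ) : ℝ :=
  ∑ v, ∑ k, Real.negMulLog (P v k)

noncomputable def vecEntropy {D : ℕ} (r : Fin D → ℝ) : ℝ :=
  ∑ i, Real.negMulLog (r i)

noncomputable def sinkhornDist {Dr Dc : ℕ} (M : Matrix (Fin Dr) (Fin Dc) ℝ)
    (α : ℝ) (r : Fin Dr → ℝ) (c : Fin Dc → ℝ) : ℝ :=
  sInf ((fun P => ∑ i, ∑ j, P i j * M i j) ''
    {P ∈ transportPolytope r c |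
      vecEntropy r + vecEntropy c - α ≤ matEntropy P})

lemma scalar_aux (p q : ℝ) (hp : 0 ≤ p) (hq : 0 ≤ q) (h0 : q = 0 → p = 0) :
    Real.negMulLog p + p * Real.log q ≤ q - p ∧
      (Real.negMulLog p + p * Real.log q = q - p → p = q) := by
  rcases eq_or_lt_of_le hq with hq0 | hqpos
  · have hp0 := h0 hq0.symm
    subst hp0
    simp [← hq0, Real.negMulLog]
  rcases eq_or_lt_of_le hp with hp0 | hppos
  · constructor
    · simp [← hp0, Real.negMulLog]
      linarith
    · intro h
      simp [← hp0, Real.negMulLog] at h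
      simp [← hp0, ← h]
  · have hkey : Real.negMulLog p + p * Real.log q = p * Real.log (q / p) := by
      rw [Real.log_div (ne_of_gt hqpos) (ne_of_gt hppos), Real.negMulLog]
      ring
    have hle : Real.log (q / p) ≤ q / p - 1 :=
      Real.log_le_sub_one_of_pos (div_pos hqpos hppos)
    constructor
    · calc Real.negMulLog p + p * Real.log q = p * Real.log (q / p) := hkey
        _ ≤ p * (q / p - 1) := by nlinarith
        _ = q - p := by field_simp
    · intro h
      by_contra hne
      have hne1 : q / p ≠ 1 := by
        intro h1
        exact hne ((div_eq_one_iff_eq (ne_of_gt hppos)).mp h1).symm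
      have hlt : Real.log (q / p) < q / p - 1 :=
        Real.log_lt_sub_one_of_pos (div_pos hqpos hppos) hne1
      rw [hkey] at h
      have : p * (q / p - 1) = q - p := by field_simp
      nlinarith [mul_lt_mul_of_pos_left hlt hppos]

theorem stmt9 {Dr Dc : ℕ}
    (M : Matrix (Fin Dr) (Fin Dc) ℝ) (hM : ∀ i j, 0 ≤ M i j)
    (r : Fin Dr → ℝ) (hr0 : ∀ i, 0 ≤ r i) (hr1 : ∑ i, r i = 1)
    (c : Fin Dc → ℝ) (hc0 : ∀ j, 0 ≤ c j) (hc1 : ∑ j, c j = 1) :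
    {P ∈ transportPolytope r c |
        vecEntropy r + vecEntropy c - 0 ≤ matEntropy P} =
      {Matrix.of fun i j => r i * c j} ∧
    sinkhornDist M 0 r c = ∑ i, ∑ j, r i * c j * M i j := by
  set Q : Matrix (Fin Dr) (Fin Dc) ℝ := Matrix.of fun i j => r i * c j with hQ
  -- Q is in the transport polytope
  have hQmem : Q ∈ transportPolytope r c := by
    refine ⟨fun v k => mul_nonneg (hr0 v) (hc0 k), fun v => ?_, fun k => ?_⟩
    · simp [hQ, ← Finset.mul_sum, hc1]
    · simp [hQ, ← Finset.sum_mul, hr1]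
  -- entropy of Q
  have hQent : matEntropy Q = vecEntropy r + vecEntropy c := by
    unfold matEntropy vecEntropy
    have : ∀ i j, Real.negMulLog (Q i j)
        = c j * Real.negMulLog (r i) + r i * Real.negMulLog (c j) := by
      intro i j
      simp [hQ, Real.negMulLog_mul]
    simp only [this, Finset.sum_add_distrib, ← Finset.mul_sum, ← Finset.sum_mul, hc1, hr1]
    ring
  -- main set equality
  have hset : {P ∈ transportPolytope r c |
      vecEntropy r + vecEntropy c - 0 ≤ matEntropy P} = {Q} := by
    ext P
    constructor
    · rintro ⟨⟨hPnn, hPr, hPc⟩, hPent⟩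
      simp only [Set.mem_singleton_iff]
      -- P i j ≤ r i and ≤ c j
      have hPle_r : ∀ i j, P i j ≤ r i := by
        intro i j
        rw [← hPr i]
        exact Finset.single_le_sum (fun k _ => hPnn i k) (Finset.mem_univ j)
      have hPle_c : ∀ i j, P i j ≤ c j := by
        intro i j
        rw [← hPc j]
        exact Finset.single_le_sum (fun v _ => hPnn v j) (Finset.mem_univ i)
      have h0 : ∀ i j, r i * c j = 0 → P i j = 0 := by
        intro i j h
        rcases mul_eq_zero.mp h with h | h
        · exact le_antisymm (h ▸ hPle_r i j) (hPnn i j)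
        · exact le_antisymm (h ▸ hPle_c i j) (hPnn i j)
      have key : ∀ i j,
          Real.negMulLog (P i j) + P i j * Real.log (r i * c j) ≤ r i * c j - P i j ∧
          (Real.negMulLog (P i j) + P i j * Real.log (r i * c j) = r i * c j - P i j
            → P i j = r i * c j) := fun i j =>
        scalar_aux (P i j) (r i * c j) (hPnn i j)
          (mul_nonneg (hr0 i) (hc0 j)) (h0 i j)
      -- split log of product where P i j ≠ 0
      have hsplit : ∀ i j, P i j * Real.log (r i * c j)
          = P i j * Real.log (r i) + P i j * Real.log (c j) := by
        intro i j
        rcases eq_or_lt_of_le (hPnn i j) with hz | hpos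
        · simp [← hz]
        · have hri : r i ≠ 0 := ne_of_gt (lt_of_lt_of_le hpos (hPle_r i j))
          have hcj : c j ≠ 0 := ne_of_gt (lt_of_lt_of_le hpos (hPle_c i j))
          rw [Real.log_mul hri hcj]; ring
      -- total of LHS terms
      have hsum_log : ∑ i, ∑ j, P i j * Real.log (r i * c j)
          = -(vecEntropy r + vecEntropy c) := by
        simp only [hsplit, Finset.sum_add_distrib]
        have h1 : ∑ i, ∑ j, P i j * Real.log (r i)
            = ∑ i, r i * Real.log (r i) := by
          refine Finset.sum_congr rfl fun i _ => ?_
          rw [← Finset.sum_mul, hPr i]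
        have h2 : ∑ i, ∑ j, P i j * Real.log (c j)
            = ∑ j, c j * Real.log (c j) := by
          rw [Finset.sum_comm]
          refine Finset.sum_congr rfl fun j _ => ?_
          rw [← Finset.sum_mul, hPc j]
        rw [h1, h2]
        unfold vecEntropy
        simp [Real.negMulLog, Finset.sum_neg_distrib]
        ring
      have hsumP : ∑ i, ∑ j, P i j = 1 := by
        rw [← hr1]; exact Finset.sum_congr rfl fun i _ => hPr i
      have hsumQ : ∑ i, ∑ j, r i * c j = 1 := by
        rw [← hr1]
        refine Finset.sum_congr rfl fun i _ => ?_
        rw [← Finset.mul_sum, hc1, mul_one]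
      -- sum of nonneg slack terms equals zero
      have hslack : ∑ i, ∑ j, (r i * c j - P i j
          - (Real.negMulLog (P i j) + P i j * Real.log (r i * c j))) = 0 := by
        have hexp : ∑ i, ∑ j, (r i * c j - P i j
            - (Real.negMulLog (P i j) + P i j * Real.log (r i * c j)))
            = (∑ i, ∑ j, r i * c j) - (∑ i, ∑ j, P i j)
              - (matEntropy P + ∑ i, ∑ j, P i j * Real.log (r i * c j)) := by
          unfold matEntropy
          simp only [Finset.sum_sub_distrib, Finset.sum_add_distrib]
        have hnn : 0 ≤ ∑ i, ∑ j, (r i * c j - P i j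
            - (Real.negMulLog (P i j) + P i j * Real.log (r i * c j))) :=
          Finset.sum_nonneg fun i _ => Finset.sum_nonneg fun j _ => by
            linarith [(key i j).1]
        rw [hexp] at hnn ⊢
        rw [hsumP, hsumQ, hsum_log] at hnn ⊢
        linarith [hPent]
      -- each slack term is zero
      have hzero : ∀ i ∈ Finset.univ, ∀ j ∈ Finset.univ, (r i * c j - P i j
          - (Real.negMulLog (P i j) + P i j * Real.log (r i * c j))) = 0 := by
        have h1 : ∀ i ∈ (Finset.univ : Finset (Fin Dr)),
            (∑ j, (r i * c j - P i j
              - (Real.negMulLog (P i j) + P i j * Real.log (r i * c j)))) = 0 := by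
          rw [← Finset.sum_eq_zero_iff_of_nonneg]
          · exact hslack
          · intro i _
            exact Finset.sum_nonneg fun j _ => by linarith [(key i j).1]
        intro i hi j hj
        have := (Finset.sum_eq_zero_iff_of_nonneg
          (fun j _ => by linarith [(key i j).1] : ∀ j ∈ Finset.univ,
            0 ≤ r i * c j - P i j
              - (Real.negMulLog (P i j) + P i j * Real.log (r i * c j)))).mp
          (h1 i hi) j hj
        exact this
      ext i j
      have := (key i j).2 (by linarith [hzero i (Finset.mem_univ i) j (Finset.mem_univ j)])
      simpa [hQ] using this
    · intro hP
      simp only [Set.mem_singleton_iff] at hP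
      subst hP
      exact ⟨hQmem, by rw [hQent]; simp⟩
  refine ⟨hset, ?_⟩
  unfold sinkhornDist
  rw [hset]
  rw [Set.image_singleton, csInf_singleton]
  rfl
end

section
/- Let M ∈ [0,2]^{V×K} with V ≥ 8, x̃ ∈ Δ^V, z ∈ Δ^K, and φ(z) = softmax((2 − M)z). Then the cross-entropy −x̃^T log φ(z) satisfies −x̃^T log φ(z) ≥ (log V − 2) + Σ_v x̃_v Σ_k z_k m_{vk} ≥ d_M(x̃, z), and in particular −x̃^T log φ(z) ≥ log V − 2 > 0. -/
open scoped BigOperators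

theorem stmt19 {V K : ℕ} (hV : 8 ≤ V)
    (M : Matrix (Fin V) (Fin K) ℝ) (hM : ∀ v k, M v k ∈ Set.Icc (0:ℝ) 2)
    (x : Fin V → ℝ) (hx0 : ∀ v, 0 ≤ x v) (hx1 : ∑ v, x v = 1)
    (z : Fin K → ℝ) (hz0 : ∀ k, 0 ≤ z k) (hz1 : ∑ k, z k = 1)
    (φ : Fin V → ℝ)
    (hφ : ∀ v, φ v = Real.exp (∑ k, z k * (2 - M v k)) /
      ∑ v', Real.exp (∑ k, z k * (2 - M v' k))) :
    (Real.log V - 2) + ∑ v, x v * ∑ k, z k * M v k ≤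
      - ∑ v, x v * Real.log (φ v) ∧
    otDist M x z ≤ (Real.log V - 2) + ∑ v, x v * ∑ k, z k * M v k ∧
    Real.log V - 2 ≤ - ∑ v, x v * Real.log (φ v) ∧
    0 < Real.log V - 2 := by
  have hVpos : 0 < V := by omega
  -- the s_v
  set s : Fin V → ℝ := fun v => ∑ k, z k * (2 - M v k) with hs
  have hsnn : ∀ v, 0 ≤ s v := fun v =>
    Finset.sum_nonneg fun k _ => mul_nonneg (hz0 k) (by linarith [(hM v k).2])
  have hsval : ∀ v, s v = 2 - ∑ k, z k * M v k := by
    intro v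
    simp only [hs, mul_sub]
    rw [Finset.sum_sub_distrib, ← Finset.sum_mul, hz1]
    ring
  set S : ℝ := ∑ v', Real.exp (s v') with hS
  have hSge : (V : ℝ) ≤ S := by
    have : ∀ v ∈ Finset.univ (α := Fin V), (1 : ℝ) ≤ Real.exp (s v) := fun v _ =>
      Real.one_le_exp (hsnn v)
    calc (V : ℝ) = ∑ _v : Fin V, (1 : ℝ) := by simp
      _ ≤ S := Finset.sum_le_sum this
  have hSpos : 0 < S := lt_of_lt_of_le (by positivity) hSge
  have hlogφ : ∀ v, Real.log (φ v) = s v - Real.log S := by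
    intro v
    rw [hφ v, Real.log_div (Real.exp_ne_zero _) (ne_of_gt hSpos), Real.log_exp]
  have hlogV : Real.log V ≤ Real.log S := Real.log_le_log (by positivity) hSge
  -- cross-entropy identity
  have hce : - ∑ v, x v * Real.log (φ v) = Real.log S - 2 + ∑ v, x v * ∑ k, z k * M v k := by
    have : ∑ v, x v * Real.log (φ v)
        = ∑ v, x v * (2 - ∑ k, z k * M v k - Real.log S) := by
      apply Finset.sum_congr rfl
      intro v _
      rw [hlogφ v, hsval v]
    rw [this]
    have h2 : ∑ v, x v * (2 - ∑ k, z k * M v k - Real.log S)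
        = ∑ v, (x v * (2 - Real.log S) - x v * ∑ k, z k * M v k) := by
      apply Finset.sum_congr rfl; intro v _; ring
    rw [h2, Finset.sum_sub_distrib, ← Finset.sum_mul, hx1]
    ring
  have hMsum_nn : 0 ≤ ∑ v, x v * ∑ k, z k * M v k :=
    Finset.sum_nonneg fun v _ => mul_nonneg (hx0 v)
      (Finset.sum_nonneg fun k _ => mul_nonneg (hz0 k) (hM v k).1)
  have hlog2 : (0.6931471803 : ℝ) < Real.log 2 := Real.log_two_gt_d9
  have hlogVpos : 0 < Real.log V - 2 := by
    have h8 : Real.log 8 ≤ Real.log V := by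
      apply Real.log_le_log (by norm_num)
      exact_mod_cast hV
    have : Real.log 8 = 3 * Real.log 2 := by
      rw [show (8:ℝ) = 2 ^ (3:ℕ) by norm_num, Real.log_pow]; push_cast; ring
    nlinarith
  refine ⟨?_, ?_, ?_, hlogVpos⟩
  · rw [hce]; linarith
  · -- otDist bound via independent coupling
    have hmem : (fun v k => x v * z k) ∈ transportPolytope x z := by
      refine ⟨fun v k => mul_nonneg (hx0 v) (hz0 k), ?_, ?_⟩
      · intro v; rw [← Finset.mul_sum, hz1, mul_one]
      · intro k; rw [← Finset.sum_mul, hx1, one_mul]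
    have hcost : (∑ v, ∑ k, (x v * z k) * M v k) = ∑ v, x v * ∑ k, z k * M v k := by
      apply Finset.sum_congr rfl; intro v _
      rw [Finset.mul_sum]; apply Finset.sum_congr rfl; intro k _; ring
    have hbdd : BddBelow ((fun P => ∑ v, ∑ k, P v k * M v k) '' transportPolytope x z) := by
      refine ⟨0, ?_⟩
      rintro y ⟨P, hP, rfl⟩
      exact Finset.sum_nonneg fun v _ => Finset.sum_nonneg fun k _ =>
        mul_nonneg (hP.1 v k) (hM v k).1
    have h1 : otDist M x z ≤ ∑ v, x v * ∑ k, z k * M v k := by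
      rw [← hcost]
      exact csInf_le hbdd ⟨_, hmem, rfl⟩
    linarith
  · rw [hce]; linarith
end
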